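/- Let C₁ and C₂ be the boundaries of two axis-aligned rectilinear simple closed curves meeting transversally at exactly two crossings so that they bound a bigon B whose two arcs, with the orientations induced from C₁ and C₂, do not orient B coherently as a circle. If dots occur exactly at corners turning from vertical to horizontal and X marks at corners from horizontal to vertical along each curve, then B contains at least one dot and at least one X mark on its boundary. -/

import Mathlib

/-!
A rectilinear arc with at least three edges turns at two consecutive corners, which are of
opposite kinds: one is a dot and the other an X mark. So only arcs with one or two edges need
care. Their displacement has exactly as many nonzero coordinates as the arc has edges, so two
short arcs joining the same crossings have the same number of edges. Two one-edge arcs then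
coincide, and so do two two-edge arcs starting in the same direction; two two-edge arcs
starting in different directions turn at a dot and at an X mark respectively.
-/

namespace Rectilinear

def IsAxisStep (v : ℤ × ℤ) : Prop :=
  (v.1 = 0 ∧ v.2 ≠ 0) ∨ (v.2 = 0 ∧ v.1 ≠ 0)

def Alternate (u v : ℤ × ℤ) : Prop :=
  u.2 = 0 ↔ v.2 ≠ 0

def IsPath (L : List (ℤ × ℤ)) : Prop :=
  (∀ v ∈ L, IsAxisStep v) ∧ L.IsChain Alternate

/-- A corner where travel turns from vertical to horizontal. -/
def HasDot (L : List (ℤ × ℤ)) : Prop :=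
  ∃ i, i + 1 < L.length ∧ (L[i]!).1 = 0 ∧ (L[i+1]!).2 = 0

/-- A corner where travel turns from horizontal to vertical. -/
def HasXMark (L : List (ℤ × ℤ)) : Prop :=
  ∃ i, i + 1 < L.length ∧ (L[i]!).2 = 0 ∧ (L[i+1]!).1 = 0

def nonzeroCoords (v : ℤ × ℤ) : ℕ :=
  (if v.1 = 0 then 0 else 1) + (if v.2 = 0 then 0 else 1)

theorem IsAxisStep.fst_eq_zero_iff {v : ℤ × ℤ} (hv : IsAxisStep v) : v.1 = 0 ↔ v.2 ≠ 0 := by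
  unfold IsAxisStep at hv
  tauto

theorem IsAxisStep.nonzeroCoords_eq_one {v : ℤ × ℤ} (hv : IsAxisStep v) : nonzeroCoords v = 1 := by
  rcases hv with ⟨h1, h2⟩ | ⟨h2, h1⟩ <;> simp [nonzeroCoords, h1, h2]

theorem Alternate.snd_eq_zero {u v : ℤ × ℤ} (h : Alternate u v) (hu : u.2 ≠ 0) : v.2 = 0 :=
  by_contra fun hv => hu (h.mpr hv)

theorem HasDot.cons {L : List (ℤ × ℤ)} (h : HasDot L) (a : ℤ × ℤ) : HasDot (a :: L) := by
  obtain ⟨i, hi, h1, h2⟩ := h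
  exact ⟨i + 1, by simpa using hi, by simpa using h1, by simpa using h2⟩

theorem HasXMark.cons {L : List (ℤ × ℤ)} (h : HasXMark L) (a : ℤ × ℤ) : HasXMark (a :: L) := by
  obtain ⟨i, hi, h1, h2⟩ := h
  exact ⟨i + 1, by simpa using hi, by simpa using h1, by simpa using h2⟩

namespace IsPath

variable {a b : ℤ × ℤ} {L : List (ℤ × ℤ)}

theorem tail (h : IsPath (a :: L)) : IsPath L :=
  ⟨fun v hv => h.1 v (List.mem_cons_of_mem a hv), h.2.tail⟩

theorem axisStep_head (h : IsPath (a :: L)) : IsAxisStep a :=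
  h.1 a List.mem_cons_self

theorem alternate_head (h : IsPath (a :: b :: L)) : Alternate a b :=
  (List.isChain_cons_cons.mp h.2).1

theorem hasDot_of_head_snd_ne_zero (h : IsPath (a :: b :: L)) (ha : a.2 ≠ 0) :
    HasDot (a :: b :: L) := by
  have hb : b.2 = 0 := h.alternate_head.snd_eq_zero ha
  exact ⟨0, by simp, by simpa using h.axisStep_head.fst_eq_zero_iff.mpr ha, by simpa using hb⟩

theorem hasXMark_of_head_snd_eq_zero (h : IsPath (a :: b :: L)) (ha : a.2 = 0) :
    HasXMark (a :: b :: L) := by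
  have hb : b.2 ≠ 0 := h.alternate_head.mp ha
  exact ⟨0, by simp, by simpa using ha, by simpa using h.tail.axisStep_head.fst_eq_zero_iff.mpr hb⟩

/-- The first two corners of a path are of opposite kinds. -/
theorem hasDot_and_hasXMark_of_three_le_length (h : IsPath L) (hL : 3 ≤ L.length) :
    HasDot L ∧ HasXMark L := by
  match L, h, hL with
  | a :: b :: c :: L, h, _ =>
    by_cases ha : a.2 = 0
    · have hb : b.2 ≠ 0 := h.alternate_head.mp ha
      exact ⟨(h.tail.hasDot_of_head_snd_ne_zero hb).cons a, h.hasXMark_of_head_snd_eq_zero ha⟩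
    · have hb : b.2 = 0 := h.alternate_head.snd_eq_zero ha
      exact ⟨h.hasDot_of_head_snd_ne_zero ha, (h.tail.hasXMark_of_head_snd_eq_zero hb).cons a⟩

theorem nonzeroCoords_sum (h : IsPath L) (hL : L.length ≤ 2) :
    nonzeroCoords L.sum = L.length := by
  match L, h, hL with
  | [], _, _ => rfl
  | [a], h, _ => simpa using h.axisStep_head.nonzeroCoords_eq_one
  | [a, b], h, _ =>
    have ha := h.axisStep_head.fst_eq_zero_iff
    have hb := h.tail.axisStep_head.fst_eq_zero_iff
    have hab := h.alternate_head
    by_cases ha₂ : a.2 = 0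
    · have hb₂ : b.2 ≠ 0 := hab.mp ha₂
      have ha₁ : a.1 ≠ 0 := fun h => ha.mp h ha₂
      simp [nonzeroCoords, ha₁, ha₂, hb.mpr hb₂, hb₂]
    · have hb₂ : b.2 = 0 := hab.snd_eq_zero ha₂
      have hb₁ : b.1 ≠ 0 := fun h => hb.mp h hb₂
      simp [nonzeroCoords, ha.mpr ha₂, ha₂, hb₁, hb₂]

theorem eq_of_sum_eq_of_two_edges {a₁ a₂ b₁ b₂ : ℤ × ℤ} (hA : IsPath [a₁, a₂])
    (hB : IsPath [b₁, b₂]) (hdir : a₁.2 = 0 ↔ b₁.2 = 0) (hsum : a₁ + a₂ = b₁ + b₂) :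
    [a₁, a₂] = [b₁, b₂] := by
  have ha₁ := hA.axisStep_head.fst_eq_zero_iff
  have ha₂ := hA.tail.axisStep_head.fst_eq_zero_iff
  have hb₁ := hB.axisStep_head.fst_eq_zero_iff
  have hb₂ := hB.tail.axisStep_head.fst_eq_zero_iff
  have ha := hA.alternate_head
  have hb := hB.alternate_head
  have hsum₁ := congrArg Prod.fst hsum
  have hsum₂ := congrArg Prod.snd hsum
  simp only [Prod.fst_add, Prod.snd_add] at hsum₁ hsum₂
  simp only [List.cons.injEq, Prod.ext_iff, and_true]
  by_cases h₁ : a₁.2 = 0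
  · have h₂ : b₁.2 = 0 := hdir.mp h₁
    have h₃ : a₂.1 = 0 := ha₂.mpr (ha.mp h₁)
    have h₄ : b₂.1 = 0 := hb₂.mpr (hb.mp h₂)
    omega
  · have h₂ : b₁.2 ≠ 0 := fun h => h₁ (hdir.mpr h)
    have h₃ : a₁.1 = 0 := ha₁.mpr h₁
    have h₄ : b₁.1 = 0 := hb₁.mpr h₂
    have h₅ : a₂.2 = 0 := ha.snd_eq_zero h₁
    have h₆ : b₂.2 = 0 := hb.snd_eq_zero h₂
    omega

theorem opposite_corners_of_sum_eq {A B : List (ℤ × ℤ)} (hA : IsPath A) (hB : IsPath B)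
    (hAlen : A.length ≤ 2) (hBlen : B.length ≤ 2) (hsum : A.sum = B.sum) (hAB : A ≠ B) :
    (HasDot A ∧ HasXMark B) ∨ (HasXMark A ∧ HasDot B) := by
  have hlen : A.length = B.length := by
    rw [← hA.nonzeroCoords_sum hAlen, hsum, hB.nonzeroCoords_sum hBlen]
  match A, B, hA, hB, hAlen, hlen with
  | [], [], _, _, _, _ => exact absurd rfl hAB
  | [a], [b], _, _, _, _ => exact absurd (by simpa using hsum) hAB
  | [a₁, a₂], [b₁, b₂], hA, hB, _, _ =>
    by_cases ha : a₁.2 = 0 <;> by_cases hb : b₁.2 = 0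
    · exact absurd (hA.eq_of_sum_eq_of_two_edges hB (iff_of_true ha hb) (by simpa using hsum)) hAB
    · exact .inr ⟨hA.hasXMark_of_head_snd_eq_zero ha, hB.hasDot_of_head_snd_ne_zero hb⟩
    · exact .inl ⟨hA.hasDot_of_head_snd_ne_zero ha, hB.hasXMark_of_head_snd_eq_zero hb⟩
    · exact absurd (hA.eq_of_sum_eq_of_two_edges hB (iff_of_false ha hb) (by simpa using hsum)) hAB

end IsPath

end Rectilinear

open Rectilinear in
theorem bigon_noncoherent_has_dot_and_xmark_general
    (A B : List (ℤ × ℤ))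
    (hAax : ∀ v ∈ A, (v.1 = 0 ∧ v.2 ≠ 0) ∨ (v.2 = 0 ∧ v.1 ≠ 0))
    (hBax : ∀ v ∈ B, (v.1 = 0 ∧ v.2 ≠ 0) ∨ (v.2 = 0 ∧ v.1 ≠ 0))
    (hAalt : List.Chain' (fun u v => (u.2 = 0 ↔ v.2 ≠ 0)) A)
    (hBalt : List.Chain' (fun u v => (u.2 = 0 ↔ v.2 ≠ 0)) B)
    (hsum : A.sum = B.sum)
    (hAB : A ≠ B) :
    ((∃ i, i + 1 < A.length ∧ (A[i]!).1 = 0 ∧ (A[i+1]!).2 = 0) ∨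
      (∃ i, i + 1 < B.length ∧ (B[i]!).1 = 0 ∧ (B[i+1]!).2 = 0)) ∧
    ((∃ i, i + 1 < A.length ∧ (A[i]!).2 = 0 ∧ (A[i+1]!).1 = 0) ∨
      (∃ i, i + 1 < B.length ∧ (B[i]!).2 = 0 ∧ (B[i+1]!).1 = 0)) := by
  have hA : IsPath A := ⟨hAax, hAalt⟩
  have hB : IsPath B := ⟨hBax, hBalt⟩
  show (HasDot A ∨ HasDot B) ∧ (HasXMark A ∨ HasXMark B)
  by_cases hAlen : 3 ≤ A.length
  · obtain ⟨hdot, hx⟩ := hA.hasDot_and_hasXMark_of_three_le_length hAlen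
    exact ⟨.inl hdot, .inl hx⟩
  by_cases hBlen : 3 ≤ B.length
  · obtain ⟨hdot, hx⟩ := hB.hasDot_and_hasXMark_of_three_le_length hBlen
    exact ⟨.inr hdot, .inr hx⟩
  rcases hA.opposite_corners_of_sum_eq hB (by omega) (by omega) hsum hAB with ⟨hdot, hx⟩ | ⟨hx, hdot⟩
  · exact ⟨.inl hdot, .inr hx⟩
  · exact ⟨.inr hdot, .inl hx⟩

/-- A bigon bounded by one arc of a rectilinear curve `C₁` and one arc of a
rectilinear curve `C₂`, both arcs oriented from one crossing to the other
(non-coherent orientations).  Each arc is modeled as its list of edge vectors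
in `ℤ × ℤ`: each edge is axis-parallel and nonzero, consecutive edges
alternate horizontal/vertical, and both arcs have the same total displacement
(they join the same two crossings) while being distinct.  Dots occur at
corners turning from vertical to horizontal travel and X marks at corners
from horizontal to vertical.  Then the boundary of the bigon carries at least
one dot and at least one X mark. -/
theorem bigon_noncoherent_has_dot_and_xmark
    (A B : List (ℤ × ℤ)) (hA : A ≠ []) (hB : B ≠ [])
    (hAax : ∀ v ∈ A, (v.1 = 0 ∧ v.2 ≠ 0) ∨ (v.2 = 0 ∧ v.1 ≠ 0))
    (hBax : ∀ v ∈ B, (v.1 = 0 ∧ v.2 ≠ 0) ∨ (v.2 = 0 ∧ v.1 ≠ 0))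
    (hAalt : List.Chain' (fun u v => (u.2 = 0 ↔ v.2 ≠ 0)) A)
    (hBalt : List.Chain' (fun u v => (u.2 = 0 ↔ v.2 ≠ 0)) B)
    (hsum : A.sum = B.sum)
    (hAB : A ≠ B) :
    ((∃ i, i + 1 < A.length ∧ (A[i]!).1 = 0 ∧ (A[i+1]!).2 = 0) ∨
      (∃ i, i + 1 < B.length ∧ (B[i]!).1 = 0 ∧ (B[i+1]!).2 = 0)) ∧
    ((∃ i, i + 1 < A.length ∧ (A[i]!).2 = 0 ∧ (A[i+1]!).1 = 0) ∨
      (∃ i, i + 1 < B.length ∧ (B[i]!).2 = 0 ∧ (B[i+1]!).1 = 0)) :=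
  bigon_noncoherent_has_dot_and_xmark_general A B hAax hBax hAalt hBalt hsum hAB
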